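/- arXiv:1802.08686 — 4 statements merged into one kernel-verified Lean document; each statement's English description precedes it below -/
import Mathlib

section
/- For all x ≥ 0, the standard Gaussian CDF satisfies 1 - (e^{-x²/2}/√(2π)) · 2/(x + √(x²+8/π)) ≤ Φ(x) ≤ 1 - (e^{-x²/2}/√(2π)) · 2/(x + √(x²+4)). -/
/-!
Write `Q = ∫_x^∞ e^{-u²/2} du` and `E = e^{-x²/2}`, so that `Φ(x) = 1 - Q / √(2π)`; both bounds
say that the Mills ratio `Q / E` lies between the positive roots of `m² + x m = 1` and
`(2/π) m² + x m = 1`.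

For the upper bound on `Φ`, Cauchy–Schwarz for the weight `e^{-u²/2}` on `(x, ∞)` gives
`(∫ u e^{-u²/2})² ≤ (∫ e^{-u²/2}) (∫ u² e^{-u²/2})`, that is `E² ≤ Q (Q + x E)` after integrating
by parts.

For the lower bound, `g r = e^{-(x+r)²/2}` satisfies `g s * g t ≤ E * g √(s² + t²)` for
`s, t, x ≥ 0` because `√(s² + t²) ≤ s + t`. Integrating over the quadrant and passing to polar
coordinates gives `Q² = (∫_0^∞ g)² ≤ (π/2) E ∫_0^∞ r g r dr = (π/2) E (E - x Q)`.
-/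

open Real Set

/-- The standard normal cumulative distribution function. -/
noncomputable def Phi (x : ℝ) : ℝ :=
  (Real.sqrt (2 * π))⁻¹ * ∫ u in Set.Iic x, Real.exp (-u ^ 2 / 2)

open MeasureTheory

section

variable {E : Type*} [NormedAddCommGroup E] [NormedSpace ℝ E]

theorem integral_Ioi_of_hasDerivAt_of_integrableOn [CompleteSpace E] {f f' : ℝ → E} {a : ℝ}
    (hderiv : ∀ x ∈ Ici a, HasDerivAt f (f' x) x) (hf' : IntegrableOn f' (Ioi a))
    (hf : IntegrableOn f (Ioi a)) : ∫ x in Ioi a, f' x = -f a := by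
  simpa using integral_Ioi_of_hasDerivAt_of_tendsto' hderiv hf'
    (tendsto_zero_of_hasDerivAt_of_integrableOn_Ioi
      (fun x hx ↦ hderiv x (Ioi_subset_Ici_self hx)) hf' hf)

theorem integral_Ioi_eq_integral_Ioi_zero_comp_add (f : ℝ → E) (a : ℝ) :
    ∫ u in Ioi a, f u = ∫ r in Ioi 0, f (a + r) := by
  have := (measurePreserving_add_left volume a).setIntegral_preimage_emb
    (measurableEmbedding_addLeft a) f (Ioi a)
  simpa using this.symm

end

theorem sq_integral_mul_le_integral_mul_integral_sq_mul {α : Type*} [MeasurableSpace α]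
    {μ : Measure α} {w f : α → ℝ} (hw : 0 ≤ᵐ[μ] w) (hwi : Integrable w μ)
    (hfw : Integrable (fun a ↦ f a * w a) μ) (hf2w : Integrable (fun a ↦ f a ^ 2 * w a) μ) :
    (∫ a, f a * w a ∂μ) ^ 2 ≤ (∫ a, w a ∂μ) * ∫ a, f a ^ 2 * w a ∂μ := by
  have hquadratic (t : ℝ) : 0 ≤ (∫ a, w a ∂μ) * (t * t) + -2 * (∫ a, f a * w a ∂μ) * t
      + ∫ a, f a ^ 2 * w a ∂μ := by
    have hexpand (a : α) : (f a - t) ^ 2 * w a = f a ^ 2 * w a - 2 * t * (f a * w a)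
        + t * t * w a := by ring
    calc 0 ≤ ∫ a, (f a - t) ^ 2 * w a ∂μ :=
          integral_nonneg_of_ae (hw.mono fun a ha ↦ mul_nonneg (sq_nonneg _) ha)
      _ = _ := by
        simp_rw [hexpand]
        rw [integral_add (f := fun a ↦ f a ^ 2 * w a - 2 * t * (f a * w a))
          (hf2w.sub (hfw.const_mul _)) (hwi.const_mul _), integral_sub hf2w (hfw.const_mul _),
          integral_const_mul, integral_const_mul]
        ring
  have hdiscr := discrim_le_zero hquadratic
  rw [discrim] at hdiscr
  nlinarith

theorem integral_comp_sqrt_sq_add_sq (g : ℝ → ℝ) :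
    ∫ p : ℝ × ℝ, g √(p.1 ^ 2 + p.2 ^ 2) = 2 * π * ∫ r in Ioi 0, r * g r := by
  rw [← integral_comp_polarCoord_symm, polarCoord_target,
    setIntegral_congr_fun (measurableSet_Ioi.prod measurableSet_Ioo)
      (g := fun p : ℝ × ℝ ↦ (p.1 * g p.1) * (1 : ℝ)), Measure.volume_eq_prod,
    setIntegral_prod_mul (fun r ↦ r * g r) (fun _ ↦ (1 : ℝ))]
  · have h2π : max (π + π) 0 = π * 2 := by rw [max_eq_left (by positivity)]; ring
    simp [mul_comm, h2π]
  · rintro ⟨r, θ⟩ ⟨hr, -⟩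
    have : (r * cos θ) ^ 2 + (r * sin θ) ^ 2 = r ^ 2 := by
      linear_combination r ^ 2 * sin_sq_add_cos_sq θ
    simp [polarCoord_symm_apply, this, sqrt_sq (le_of_lt hr)]

theorem sq_integral_Ioi_le_of_mul_le_comp_sqrt_sq_add_sq {g : ℝ → ℝ} {c : ℝ}
    (hg : ∀ r, 0 ≤ r → 0 ≤ g r)
    (hmul : ∀ s t, 0 ≤ s → 0 ≤ t → g s * g t ≤ c * g √(s ^ 2 + t ^ 2))
    (hint : Integrable fun p : ℝ × ℝ ↦ g √(p.1 ^ 2 + p.2 ^ 2)) :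
    (∫ r in Ioi 0, g r) ^ 2 ≤ c * (π / 2) * ∫ r in Ioi 0, r * g r := by
  have hsq : (∫ r in Ioi 0, g r) ^ 2 = (∫ p : ℝ × ℝ, g |p.1| * g |p.2|) / 4 := by
    rw [Measure.volume_eq_prod, integral_prod_mul (fun s ↦ g |s|) (fun t ↦ g |t|),
      integral_comp_abs]
    ring
  have hmono : ∫ p : ℝ × ℝ, g |p.1| * g |p.2| ≤ ∫ p : ℝ × ℝ, c * g √(p.1 ^ 2 + p.2 ^ 2) :=
    integral_mono_of_nonneg
      (ae_of_all _ fun p ↦ mul_nonneg (hg _ (abs_nonneg _)) (hg _ (abs_nonneg _)))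
      (hint.const_mul c)
      (ae_of_all _ fun p ↦ by simpa using hmul |p.1| |p.2| (abs_nonneg _) (abs_nonneg _))
  rw [integral_const_mul, integral_comp_sqrt_sq_add_sq] at hmono
  rw [hsq]
  linarith

theorem integrable_exp_neg_sq_div_two : Integrable fun u : ℝ ↦ exp (-u ^ 2 / 2) := by
  simpa [neg_div, div_eq_inv_mul] using integrable_exp_neg_mul_sq (by norm_num : (0 : ℝ) < 2⁻¹)

theorem integrable_mul_exp_neg_sq_div_two : Integrable fun u : ℝ ↦ u * exp (-u ^ 2 / 2) := by
  simpa [neg_div, div_eq_inv_mul] using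
    integrable_mul_exp_neg_mul_sq (by norm_num : (0 : ℝ) < 2⁻¹)

theorem integrable_sq_mul_exp_neg_sq_div_two :
    Integrable fun u : ℝ ↦ u ^ 2 * exp (-u ^ 2 / 2) := by
  simpa [neg_div, div_eq_inv_mul] using
    integrable_rpow_mul_exp_neg_mul_sq (by norm_num : (0 : ℝ) < 2⁻¹) (s := 2) (by norm_num)

theorem hasDerivAt_exp_neg_sq_div_two (u : ℝ) :
    HasDerivAt (fun v ↦ exp (-v ^ 2 / 2)) (-(u * exp (-u ^ 2 / 2))) u := by
  have h : HasDerivAt (fun v : ℝ ↦ -v ^ 2 / 2) (-u) u :=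
    ((hasDerivAt_pow 2 u).neg.div_const 2).congr_deriv (by push_cast; ring)
  simpa [mul_comm] using h.exp

theorem integral_Ioi_mul_exp_neg_sq_div_two (x : ℝ) :
    ∫ u in Ioi x, u * exp (-u ^ 2 / 2) = exp (-x ^ 2 / 2) := by
  simpa using integral_Ioi_of_hasDerivAt_of_integrableOn (f' := fun u ↦ u * exp (-u ^ 2 / 2))
    (fun u _ ↦ by simpa using (hasDerivAt_exp_neg_sq_div_two u).neg)
    integrable_mul_exp_neg_sq_div_two.integrableOn integrable_exp_neg_sq_div_two.neg.integrableOn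

theorem integral_Ioi_sq_mul_exp_neg_sq_div_two (x : ℝ) :
    ∫ u in Ioi x, u ^ 2 * exp (-u ^ 2 / 2) =
      x * exp (-x ^ 2 / 2) + ∫ u in Ioi x, exp (-u ^ 2 / 2) := by
  have hderiv (u : ℝ) : HasDerivAt (fun v ↦ -(v * exp (-v ^ 2 / 2)))
      (u ^ 2 * exp (-u ^ 2 / 2) - exp (-u ^ 2 / 2)) u :=
    ((hasDerivAt_id u).mul (hasDerivAt_exp_neg_sq_div_two u)).neg.congr_deriv
      (by simp only [id]; ring)
  have h := integral_Ioi_of_hasDerivAt_of_integrableOn (a := x) (fun u _ ↦ hderiv u)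
    (integrable_sq_mul_exp_neg_sq_div_two.sub integrable_exp_neg_sq_div_two).integrableOn
    integrable_mul_exp_neg_sq_div_two.neg.integrableOn
  rw [integral_sub integrable_sq_mul_exp_neg_sq_div_two.integrableOn
    integrable_exp_neg_sq_div_two.integrableOn] at h
  linarith

noncomputable def gaussTail (x : ℝ) : ℝ := ∫ u in Ioi x, exp (-u ^ 2 / 2)

theorem gaussTail_pos (x : ℝ) : 0 < gaussTail x := by
  rw [gaussTail, setIntegral_pos_iff_support_of_nonneg_ae
    (ae_of_all _ fun u ↦ (exp_pos _).le) integrable_exp_neg_sq_div_two.integrableOn]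
  simp [Function.support, (exp_pos _).ne']

theorem Phi_eq_one_sub_gaussTail (x : ℝ) : Phi x = 1 - gaussTail x / √(2 * π) := by
  have htotal : ∫ u : ℝ, exp (-u ^ 2 / 2) = √(2 * π) := by
    simpa [neg_div, div_eq_inv_mul] using integral_gaussian (2⁻¹ : ℝ)
  have hsplit := intervalIntegral.integral_Iic_add_Ioi (b := x)
    integrable_exp_neg_sq_div_two.integrableOn integrable_exp_neg_sq_div_two.integrableOn
  rw [htotal] at hsplit
  rw [Phi, gaussTail, eq_sub_of_add_eq hsplit]
  have : 0 < √(2 * π) := by positivity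
  field_simp

theorem sq_exp_le_gaussTail_mul (x : ℝ) :
    exp (-x ^ 2 / 2) ^ 2 ≤ gaussTail x * (gaussTail x + x * exp (-x ^ 2 / 2)) := by
  have h := sq_integral_mul_le_integral_mul_integral_sq_mul (μ := volume.restrict (Ioi x))
    (w := fun u ↦ exp (-u ^ 2 / 2)) (f := id) (ae_of_all _ fun u ↦ (exp_pos _).le)
    integrable_exp_neg_sq_div_two.integrableOn integrable_mul_exp_neg_sq_div_two.integrableOn
    integrable_sq_mul_exp_neg_sq_div_two.integrableOn
  simp only [id] at h
  rwa [integral_Ioi_mul_exp_neg_sq_div_two, integral_Ioi_sq_mul_exp_neg_sq_div_two, ← gaussTail,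
    add_comm (x * _)] at h

theorem gaussTail_sq_le {x : ℝ} (hx : 0 ≤ x) :
    gaussTail x ^ 2 ≤ π / 2 * exp (-x ^ 2 / 2) * (exp (-x ^ 2 / 2) - x * gaussTail x) := by
  have hmul (s t : ℝ) (hs : 0 ≤ s) (ht : 0 ≤ t) :
      exp (-(x + s) ^ 2 / 2) * exp (-(x + t) ^ 2 / 2)
        ≤ exp (-x ^ 2 / 2) * exp (-(x + √(s ^ 2 + t ^ 2)) ^ 2 / 2) := by
    have hle : √(s ^ 2 + t ^ 2) ≤ s + t := sqrt_le_iff.2 ⟨by positivity, by nlinarith⟩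
    have hsq : √(s ^ 2 + t ^ 2) ^ 2 = s ^ 2 + t ^ 2 := sq_sqrt (by positivity)
    rw [← exp_add, ← exp_add, exp_le_exp]
    nlinarith [mul_le_mul_of_nonneg_left hle hx]
  have hint : Integrable fun p : ℝ × ℝ ↦ exp (-(x + √(p.1 ^ 2 + p.2 ^ 2)) ^ 2 / 2) := by
    refine (integrable_exp_neg_sq_div_two.mul_prod integrable_exp_neg_sq_div_two).mono'
      (by fun_prop) (ae_of_all _ fun p ↦ ?_)
    have hsq : √(p.1 ^ 2 + p.2 ^ 2) ^ 2 = p.1 ^ 2 + p.2 ^ 2 := sq_sqrt (by positivity)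
    rw [norm_of_nonneg (exp_pos _).le, ← exp_add, exp_le_exp]
    nlinarith [sqrt_nonneg (p.1 ^ 2 + p.2 ^ 2)]
  have hpolar := sq_integral_Ioi_le_of_mul_le_comp_sqrt_sq_add_sq
    (fun r _ ↦ (exp_pos (-(x + r) ^ 2 / 2)).le) hmul hint
  have hfirst :
      ∫ r in Ioi 0, r * exp (-(x + r) ^ 2 / 2) = exp (-x ^ 2 / 2) - x * gaussTail x := by
    have hshift := integral_Ioi_eq_integral_Ioi_zero_comp_add
      (fun u ↦ (u - x) * exp (-u ^ 2 / 2)) x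
    simp only [add_sub_cancel_left] at hshift
    rw [← hshift, gaussTail, ← integral_Ioi_mul_exp_neg_sq_div_two x, ← integral_const_mul,
      ← integral_sub integrable_mul_exp_neg_sq_div_two.integrableOn
        (integrable_exp_neg_sq_div_two.integrableOn.const_mul x)]
    simp_rw [sub_mul]
  rwa [← integral_Ioi_eq_integral_Ioi_zero_comp_add (fun u ↦ exp (-u ^ 2 / 2)), ← gaussTail,
    hfirst, mul_comm _ (π / 2)] at hpolar

section QuadraticRoot

variable {b m x : ℝ}

theorem four_sub_mul_sq_sub_mul_eq (hb : 0 < b) :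
    4 - b * m ^ 2 - 4 * x * m = (2 - m * (x + √(x ^ 2 + b))) * (2 + m * (√(x ^ 2 + b) - x)) := by
  linear_combination m ^ 2 * sq_sqrt (show 0 ≤ x ^ 2 + b by positivity)

theorem abs_lt_sqrt_sq_add (hb : 0 < b) : |x| < √(x ^ 2 + b) := by
  rw [← sqrt_sq_eq_abs]
  exact sqrt_lt_sqrt (sq_nonneg x) (by linarith)

theorem le_two_div_add_sqrt (hb : 0 < b) (hm : 0 ≤ m) (h : b * m ^ 2 + 4 * x * m ≤ 4) :
    m ≤ 2 / (x + √(x ^ 2 + b)) := by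
  have hx := abs_lt_sqrt_sq_add (x := x) hb
  have hB : 0 < 2 + m * (√(x ^ 2 + b) - x) := by nlinarith [le_abs_self x]
  rw [le_div_iff₀ (by linarith [neg_abs_le x])]
  nlinarith [four_sub_mul_sq_sub_mul_eq (m := m) (x := x) hb]

theorem two_div_add_sqrt_le (hb : 0 < b) (hm : 0 ≤ m) (h : 4 ≤ b * m ^ 2 + 4 * x * m) :
    2 / (x + √(x ^ 2 + b)) ≤ m := by
  have hx := abs_lt_sqrt_sq_add (x := x) hb
  have hB : 0 < 2 + m * (√(x ^ 2 + b) - x) := by nlinarith [le_abs_self x]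
  rw [div_le_iff₀ (by linarith [neg_abs_le x])]
  nlinarith [four_sub_mul_sq_sub_mul_eq (m := m) (x := x) hb]

end QuadraticRoot

theorem gaussTail_le {x : ℝ} (hx : 0 ≤ x) :
    gaussTail x ≤ exp (-x ^ 2 / 2) * (2 / (x + √(x ^ 2 + 8 / π))) := by
  set E := exp (-x ^ 2 / 2)
  have hE : 0 < E := exp_pos _
  rw [← div_le_iff₀' hE]
  refine le_two_div_add_sqrt (by positivity) (div_pos (gaussTail_pos x) hE).le ?_
  have h := gaussTail_sq_le hx
  field_simp
  nlinarith [pi_pos]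

theorem le_gaussTail (x : ℝ) :
    exp (-x ^ 2 / 2) * (2 / (x + √(x ^ 2 + 4))) ≤ gaussTail x := by
  set E := exp (-x ^ 2 / 2)
  have hE : 0 < E := exp_pos _
  rw [← le_div_iff₀' hE]
  refine two_div_add_sqrt_le (by positivity) (div_pos (gaussTail_pos x) hE).le ?_
  have h := sq_exp_le_gaussTail_mul x
  field_simp
  nlinarith

theorem gaussian_cdf_bounds (x : ℝ) (hx : 0 ≤ x) :
    1 - Real.exp (-x ^ 2 / 2) / Real.sqrt (2 * π) *
        (2 / (x + Real.sqrt (x ^ 2 + 8 / π))) ≤ Phi x ∧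
    Phi x ≤ 1 - Real.exp (-x ^ 2 / 2) / Real.sqrt (2 * π) *
        (2 / (x + Real.sqrt (x ^ 2 + 4))) := by
  rw [Phi_eq_one_sub_gaussTail, div_mul_eq_mul_div, div_mul_eq_mul_div]
  exact ⟨by gcongr; exact gaussTail_le hx, by gcongr; exact le_gaussTail x⟩
end

section
/- Let g : Z → X be a map between metric spaces (X a normed space) and f : X → {1,...,K} a classifier. Define f̃(x) = f(g(z*)) where z* minimizes z ↦ ‖g(z) - x‖ (assume the minimum exists). Then for every z ∈ Z, the in-distribution robustness of f at g(z) is at most twice the unconstrained robustness of f̃ at g(z): min{‖g(z+r) - g(z)‖ : f̃(g(z+r)) ≠ f̃(g(z))} ≤ 2·min{‖v‖ : f̃(g(z)+v) ≠ f̃(g(z))}. -/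
/-!
If `v` flips `f̃` at `g z`, let `z*` be the latent nearest to `g z + v`. Since `f̃ = f` on the
range of `g`, the label at `g z*` is `f̃ (g z + v)`, so `r = z* - z` is an in-distribution
perturbation; minimality of `z*` and the triangle inequality give `‖g z* - g z‖ ≤ 2 ‖v‖`.
-/

open Set

theorem Real.sInf_le_mul_sInf {A B : Set ℝ} {c : ℝ} (hA : BddBelow A) (hc : 0 ≤ c)
    (hAB : A.Nonempty → B.Nonempty) (h : ∀ b ∈ B, ∃ a ∈ A, a ≤ c * b) :
    sInf A ≤ c * sInf B := by
  -- if `B = ∅` then `A = ∅` too, and both sides are the junk value `sInf ∅ = 0`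
  rcases B.eq_empty_or_nonempty with rfl | hB
  · have hA_empty : A = ∅ := not_nonempty_iff_eq_empty.1 fun hA' => (hAB hA').ne_empty rfl
    simp [hA_empty]
  · rw [← smul_eq_mul, ← Real.sInf_smul_of_nonneg hc]
    refine le_csInf hB.smul_set ?_
    rintro _ ⟨b, hb, rfl⟩
    obtain ⟨a, ha, hab⟩ := h b hb
    exact (csInf_le hA ha).trans hab

section NearestLatent

variable {Z X : Type*} {g : Z → X} {x : X} {zstar : Z}

theorem norm_sub_le_two_mul_of_nearest [SeminormedAddCommGroup X]
    (hnear : ∀ z, ‖g zstar - x‖ ≤ ‖g z - x‖) (z : Z) :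
    ‖g zstar - g z‖ ≤ 2 * ‖g z - x‖ :=
  calc ‖g zstar - g z‖ ≤ ‖g zstar - x‖ + ‖x - g z‖ := norm_sub_le_norm_sub_add_norm_sub _ _ _
    _ ≤ ‖g z - x‖ + ‖g z - x‖ := by rw [norm_sub_rev x]; gcongr; exact hnear z
    _ = 2 * ‖g z - x‖ := (two_mul _).symm

theorem eqOn_range_of_nearest [NormedAddGroup X] {α : Type*} {f ftil : X → α}
    (hftil : ∀ x : X, ∃ zstar : Z, (∀ z : Z, ‖g zstar - x‖ ≤ ‖g z - x‖) ∧ ftil x = f (g zstar)) :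
    EqOn ftil f (range g) := by
  rintro _ ⟨y, rfl⟩
  obtain ⟨zstar, hnear, hf⟩ := hftil (g y)
  have hself : g zstar = g y :=
    norm_sub_eq_zero_iff.1 (le_antisymm (by simpa using hnear y) (norm_nonneg _))
  rw [hf, hself]

end NearestLatent

theorem in_distribution_robustness_le_two_mul_unconstrained_general
    {Z : Type*} [AddCommGroup Z] {X : Type*} [NormedAddCommGroup X]
    {K : ℕ} (g : Z → X) (f : X → Fin K) (ftil : X → Fin K)
    -- `f̃(x) = f(g(z*))` where `z*` minimizes `z ↦ ‖g z - x‖` (the minimum exists):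
    (hftil : ∀ x : X, ∃ zstar : Z,
      (∀ z : Z, ‖g zstar - x‖ ≤ ‖g z - x‖) ∧ ftil x = f (g zstar))
    (z : Z) :
    sInf {t : ℝ | ∃ r : Z, ftil (g (z + r)) ≠ ftil (g z) ∧ t = ‖g (z + r) - g z‖} ≤
      2 * sInf {t : ℝ | ∃ v : X, ftil (g z + v) ≠ ftil (g z) ∧ t = ‖v‖} := by
  refine Real.sInf_le_mul_sInf ⟨0, ?_⟩ zero_le_two ?_ ?_
  · rintro _ ⟨r, -, rfl⟩
    exact norm_nonneg _
  · rintro ⟨_, r, hr, -⟩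
    exact ⟨_, g (z + r) - g z, by rwa [add_sub_cancel], rfl⟩
  · rintro _ ⟨v, hv, rfl⟩
    obtain ⟨zstar, hnear, hf⟩ := hftil (g z + v)
    refine ⟨_, ⟨zstar - z, ?_, rfl⟩, ?_⟩
    · rwa [add_sub_cancel, eqOn_range_of_nearest hftil (mem_range_self zstar), ← hf]
    · simpa [add_sub_cancel] using norm_sub_le_two_mul_of_nearest hnear z

/-- Nearest-neighbour classifier: the in-distribution robustness of `f̃` at `g z` is at
most twice its unconstrained robustness. -/
theorem in_distribution_robustness_le_two_mul_unconstrained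
    {Z : Type*} [AddCommGroup Z] {X : Type*} [NormedAddCommGroup X]
    {K : ℕ} (g : Z → X) (f : X → Fin K) (ftil : X → Fin K)
    -- `f̃(x) = f(g(z*))` where `z*` minimizes `z ↦ ‖g z - x‖` (the minimum exists):
    (hftil : ∀ x : X, ∃ zstar : Z,
      (∀ z : Z, ‖g zstar - x‖ ≤ ‖g z - x‖) ∧ ftil x = f (g zstar))
    (z : Z)
    -- the unconstrained robustness set is nonempty:
    (hne : ∃ v : X, ftil (g z + v) ≠ ftil (g z)) :
    sInf {t : ℝ | ∃ r : Z, ftil (g (z + r)) ≠ ftil (g z) ∧ t = ‖g (z + r) - g z‖} ≤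
      2 * sInf {t : ℝ | ∃ v : X, ftil (g z + v) ≠ ftil (g z) ∧ t = ‖v‖} :=
  in_distribution_robustness_le_two_mul_unconstrained_general g f ftil hftil z
end

section
/- (Checkerboard lower bound) Let ν be the standard Gaussian on ℝ^d and B₁ = {z ∈ ℝ^d : Σᵢ ⌊zᵢ⌋ is even}, B₂ = ℝ^d \ B₁. Then for every η ∈ [0, 1/2], ν({z ∈ B₁ : dist(z,B₂) ≤ η}) + ν({z ∈ B₂ : dist(z,B₁) ≤ η}) ≥ 1 - (1-η)^d. -/
open Real Set MeasureTheory ProbabilityTheory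

/-- The inverse of the standard normal cdf. -/
noncomputable def PhiInv : ℝ → ℝ := Function.invFun Phi

/-- The standard Gaussian measure `N(0, I_d)` on `ℝ^d`. -/
noncomputable def stdGaussian (d : ℕ) : Measure (Fin d → ℝ) :=
  Measure.pi fun _ => gaussianReal 0 1

/-- The Euclidean (ℓ₂) norm on `ℝ^d`. -/
noncomputable def l2 {d : ℕ} (z : Fin d → ℝ) : ℝ := Real.sqrt (∑ i, z i ^ 2)

/-- The ℓ₂ distance from a point to a set. -/
noncomputable def distSet {d : ℕ} (z : Fin d → ℝ) (A : Set (Fin d → ℝ)) : ℝ :=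
  sInf {t | ∃ z' ∈ A, t = l2 (z - z')}

/-!
If `frac(zᵢ) < η` or `frac(zᵢ) > 1 - η` for some coordinate, moving `zᵢ` by `η` across the
nearest integer changes `∑ ⌊zᵢ⌋` by one, so `z` lies within `η` of the other colour class. Hence
the two boundary layers cover the complement of `S = {z | ∀ i, frac(zᵢ) ∈ [η, 1 - η]}`, and
`ν(S) = γ(frac ⁻¹' [η, 1 - η])^d` for the one-dimensional Gaussian `γ`. On each cell `[j, j + 1]`
the Gaussian density is monotone, so the middle part `[j + η, j + 1 - η]` carries at most a
`1 - η` fraction of the mass of the cell, and `γ(frac ⁻¹' [η, 1 - η]) ≤ 1 - η`.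
-/

open scoped ENNReal

lemma AntitoneOn.intervalIntegral_add_le_mul {f : ℝ → ℝ} {a η : ℝ}
    (hf : AntitoneOn f (Icc a (a + 1))) (hη0 : 0 ≤ η) (hη1 : η ≤ 1) :
    ∫ x in (a + η)..(a + 1), f x ≤ (1 - η) * ∫ x in a..(a + 1), f x := by
  have ha : a ∈ Icc a (a + 1) := left_mem_Icc.2 (by linarith)
  have hm : a + η ∈ Icc a (a + 1) := ⟨by linarith, by linarith⟩
  have hb : a + 1 ∈ Icc a (a + 1) := right_mem_Icc.2 (by linarith)
  have hint {x y : ℝ} (hx : x ∈ Icc a (a + 1)) (hy : y ∈ Icc a (a + 1)) :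
      IntervalIntegrable f volume x y :=
    (hf.mono (uIcc_subset_Icc hx hy)).intervalIntegrable
  have hleft : η * f (a + η) ≤ ∫ x in a..(a + η), f x := by
    simpa [mul_comm] using intervalIntegral.integral_mono_on (by linarith)
      intervalIntegrable_const (hint ha hm)
      fun x hx => hf ⟨hx.1, by linarith [hx.2]⟩ hm hx.2
  have hright : ∫ x in (a + η)..(a + 1), f x ≤ (1 - η) * f (a + η) := by
    simpa [mul_comm, show a + 1 - (a + η) = 1 - η by ring] using
      intervalIntegral.integral_mono_on (by linarith) (hint hm hb)
        intervalIntegrable_const fun x hx => hf hm ⟨by linarith [hx.1], hx.2⟩ hx.1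
  rw [← intervalIntegral.integral_add_adjacent_intervals (hint ha hm) (hint hm hb)]
  -- `η ∫_{a+η}^{a+1} f ≤ η (1 - η) f (a + η) ≤ (1 - η) ∫_a^{a+η} f`
  linarith [mul_le_mul_of_nonneg_left hright hη0,
    mul_le_mul_of_nonneg_left hleft (sub_nonneg.2 hη1)]

lemma MonotoneOn.intervalIntegral_sub_le_mul {f : ℝ → ℝ} {a η : ℝ}
    (hf : MonotoneOn f (Icc a (a + 1))) (hη0 : 0 ≤ η) (hη1 : η ≤ 1) :
    ∫ x in a..(a + 1 - η), f x ≤ (1 - η) * ∫ x in a..(a + 1), f x := by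
  have hg : AntitoneOn (fun x => f (-x)) (Icc (-(a + 1)) (-(a + 1) + 1)) :=
    fun x hx y hy hxy => hf ⟨by linarith [hy.2], by linarith [hy.1]⟩
      ⟨by linarith [hx.2], by linarith [hx.1]⟩ (neg_le_neg hxy)
  have := hg.intervalIntegral_add_le_mul hη0 hη1
  simp only [intervalIntegral.integral_comp_neg] at this
  convert this using 3 <;> ring

lemma gaussianPDFReal_antitoneOn (μ : ℝ) (v : NNReal) :
    AntitoneOn (gaussianPDFReal μ v) (Ici μ) := by
  intro x hx y hy hxy
  have hsq : (x - μ) ^ 2 ≤ (y - μ) ^ 2 := by nlinarith [mem_Ici.1 hx]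
  unfold gaussianPDFReal
  gcongr _ * rexp (-?_ / _)

lemma gaussianPDFReal_monotoneOn (μ : ℝ) (v : NNReal) :
    MonotoneOn (gaussianPDFReal μ v) (Iic μ) := by
  intro x hx y hy hxy
  have hsq : (y - μ) ^ 2 ≤ (x - μ) ^ 2 := by nlinarith [mem_Iic.1 hy]
  unfold gaussianPDFReal
  gcongr _ * rexp (-?_ / _)

lemma intervalIntegral_gaussianPDFReal_inner_le (j : ℤ) {η : ℝ} (hη0 : 0 ≤ η) (hη : η ≤ 1 / 2) :
    ∫ x in (j + η)..(j + 1 - η), gaussianPDFReal 0 1 x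
      ≤ (1 - η) * ∫ x in j..(j + 1), gaussianPDFReal 0 1 x := by
  have hint {a b : ℝ} : IntervalIntegrable (gaussianPDFReal 0 1) volume a b :=
    (integrable_gaussianPDFReal 0 1).intervalIntegrable
  have hpos {s : Set ℝ} : 0 ≤ᵐ[volume.restrict s] gaussianPDFReal 0 1 :=
    ae_of_all _ (gaussianPDFReal_nonneg 0 1)
  rcases le_or_gt 0 j with hj | hj
  · have hj : (0 : ℝ) ≤ j := by exact_mod_cast hj
    calc _ ≤ ∫ x in (j + η)..(j + 1), gaussianPDFReal 0 1 x :=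
          intervalIntegral.integral_mono_interval le_rfl (by linarith) (by linarith) hpos hint
      _ ≤ _ := ((gaussianPDFReal_antitoneOn 0 1).mono fun x hx => le_trans hj hx.1
          ).intervalIntegral_add_le_mul hη0 (by linarith)
  · have hj : (j : ℝ) + 1 ≤ 0 := by exact_mod_cast hj
    calc _ ≤ ∫ x in j..(j + 1 - η), gaussianPDFReal 0 1 x :=
          intervalIntegral.integral_mono_interval (by linarith) (by linarith) le_rfl hpos hint
      _ ≤ _ := ((gaussianPDFReal_monotoneOn 0 1).mono fun x hx => le_trans hx.2 hj
          ).intervalIntegral_sub_le_mul hη0 (by linarith)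

lemma gaussianReal_Icc (μ : ℝ) {v : NNReal} (hv : v ≠ 0) {a b : ℝ} (hab : a ≤ b) :
    gaussianReal μ v (Icc a b) = ENNReal.ofReal (∫ x in a..b, gaussianPDFReal μ v x) := by
  rw [gaussianReal_apply_eq_integral μ hv, intervalIntegral.integral_of_le hab,
    integral_Icc_eq_integral_Ioc]

lemma gaussianReal_Ico (μ : ℝ) {v : NNReal} (hv : v ≠ 0) {a b : ℝ} (hab : a ≤ b) :
    gaussianReal μ v (Ico a b) = ENNReal.ofReal (∫ x in a..b, gaussianPDFReal μ v x) := by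
  rw [gaussianReal_apply_eq_integral μ hv, intervalIntegral.integral_of_le hab,
    integral_Ico_eq_integral_Ioo, integral_Ioc_eq_integral_Ioo]

lemma measure_fract_preimage_Icc_le {μ : Measure ℝ} {η : ℝ} {c : ℝ≥0∞}
    (h : ∀ j : ℤ, μ (Icc (j + η) (j + 1 - η)) ≤ c * μ (Ico j (j + 1))) :
    μ (Int.fract ⁻¹' Icc η (1 - η)) ≤ c * μ univ := by
  have hcover : Int.fract ⁻¹' Icc η (1 - η) ⊆ ⋃ j : ℤ, Icc ((j : ℝ) + η) (j + 1 - η) := by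
    intro x ⟨hx₁, hx₂⟩
    rw [Int.fract] at hx₁ hx₂
    exact mem_iUnion.2 ⟨⌊x⌋, by constructor <;> linarith⟩
  have hpartition : μ univ = ∑' j : ℤ, μ (Ico (j : ℝ) (j + 1)) := by
    rw [← iUnion_Ico_intCast, measure_iUnion (pairwise_disjoint_Ico_intCast ℝ)
      fun _ => measurableSet_Ico]
  calc μ (Int.fract ⁻¹' Icc η (1 - η))
      ≤ ∑' j : ℤ, μ (Icc ((j : ℝ) + η) (j + 1 - η)) :=
        (measure_mono hcover).trans (measure_iUnion_le _)
    _ ≤ ∑' j : ℤ, c * μ (Ico (j : ℝ) (j + 1)) := ENNReal.tsum_le_tsum h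
    _ = c * μ univ := by rw [ENNReal.tsum_mul_left, hpartition]

lemma gaussianReal_fract_preimage_Icc_le {η : ℝ} (hη0 : 0 ≤ η) (hη : η ≤ 1 / 2) :
    (gaussianReal 0 1).real (Int.fract ⁻¹' Icc η (1 - η)) ≤ 1 - η := by
  have key := measure_fract_preimage_Icc_le (c := .ofReal (1 - η)) fun j => by
    rw [gaussianReal_Icc 0 one_ne_zero (by linarith),
      gaussianReal_Ico 0 one_ne_zero (by linarith), ← ENNReal.ofReal_mul (by linarith)]
    exact ENNReal.ofReal_le_ofReal (intervalIntegral_gaussianPDFReal_inner_le j hη0 hη)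
  rw [measure_univ, mul_one] at key
  exact ENNReal.toReal_le_of_le_ofReal (by linarith) key

instance (d : ℕ) : IsProbabilityMeasure (stdGaussian d) := by
  unfold _root_.stdGaussian
  infer_instance

lemma stdGaussian_real_univ_pi (d : ℕ) (s : Set ℝ) :
    (stdGaussian d).real (univ.pi fun _ => s) = (gaussianReal 0 1).real s ^ d := by
  simp [Measure.real, _root_.stdGaussian, Measure.pi_pi, ENNReal.toReal_pow]

lemma distSet_le_l2_sub {d : ℕ} {z z' : Fin d → ℝ} {A : Set (Fin d → ℝ)} (hz' : z' ∈ A) :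
    distSet z A ≤ l2 (z - z') :=
  csInf_le ⟨0, by rintro _ ⟨w, -, rfl⟩; exact Real.sqrt_nonneg _⟩ ⟨z', hz', rfl⟩

lemma l2_sub_update {d : ℕ} (z : Fin d → ℝ) (i : Fin d) (x : ℝ) :
    l2 (z - Function.update z i x) = |z i - x| := by
  have : z - Function.update z i x = Pi.single i (z i - x) := by
    ext j
    rcases eq_or_ne j i with rfl | hj <;> simp [*]
  rw [l2, this]
  simp [Pi.single_apply, Real.sqrt_sq_eq_abs]

lemma sum_floor_update {d : ℕ} (z : Fin d → ℝ) (i : Fin d) (x : ℝ) :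
    ∑ j, ⌊Function.update z i x j⌋ = ∑ j, ⌊z j⌋ + (⌊x⌋ - ⌊z i⌋) := by
  simp_rw [Function.apply_update (fun _ => Int.floor)]
  rw [Finset.sum_update_of_mem (Finset.mem_univ i),
    ← Finset.add_sum_erase _ (fun j => ⌊z j⌋) (Finset.mem_univ i),
    Finset.sdiff_singleton_eq_erase]
  ring

lemma exists_abs_sub_eq_odd_floor_sub {x η : ℝ} (hη : η ≤ 1)
    (hx : Int.fract x ∉ Icc η (1 - η)) : ∃ y, |x - y| = η ∧ Odd (⌊y⌋ - ⌊x⌋) := by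
  have hfract := Int.self_sub_floor x
  have h0 := Int.fract_nonneg x
  have h1 := Int.fract_lt_one x
  rw [mem_Icc, not_and_or, not_le, not_le] at hx
  rcases hx with hx | hx
  · refine ⟨x - η, by rw [sub_sub_cancel, abs_of_pos (by linarith)], -1, ?_⟩
    rw [show ⌊x - η⌋ = ⌊x⌋ - 1 by rw [Int.floor_eq_iff]; push_cast; constructor <;> linarith]
    ring
  · refine ⟨x + η, by rw [sub_add_cancel_left, abs_neg, abs_of_pos (by linarith)], 0, ?_⟩
    rw [show ⌊x + η⌋ = ⌊x⌋ + 1 by rw [Int.floor_eq_iff]; push_cast; constructor <;> linarith]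
    ring

def checkerboard (d : ℕ) : Set (Fin d → ℝ) := {z | Even (∑ i, ⌊z i⌋)}

lemma exists_l2_sub_eq_mem_checkerboard_iff {d : ℕ} {z : Fin d → ℝ} {η : ℝ} (hη : η ≤ 1)
    (hz : z ∉ univ.pi fun _ => Int.fract ⁻¹' Icc η (1 - η)) :
    ∃ z', l2 (z - z') = η ∧ (z' ∈ checkerboard d ↔ z ∉ checkerboard d) := by
  obtain ⟨i, hi⟩ : ∃ i, Int.fract (z i) ∉ Icc η (1 - η) := by
    simpa [mem_univ_pi] using hz
  obtain ⟨y, hy, hodd⟩ := exists_abs_sub_eq_odd_floor_sub hη hi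
  refine ⟨Function.update z i y, by rw [l2_sub_update, hy], ?_⟩
  simp only [checkerboard, mem_ofPred_eq, sum_floor_update, Int.even_add,
    Int.not_even_iff_odd.2 hodd, iff_false]

lemma compl_pi_fract_subset {d : ℕ} {η : ℝ} (hη : η ≤ 1) :
    (univ.pi fun _ : Fin d => Int.fract ⁻¹' Icc η (1 - η))ᶜ ⊆
      {z | z ∈ checkerboard d ∧ distSet z (checkerboard d)ᶜ ≤ η} ∪
        {z | z ∈ (checkerboard d)ᶜ ∧ distSet z (checkerboard d) ≤ η} := by
  intro z hz
  obtain ⟨z', hdist, hflip⟩ := exists_l2_sub_eq_mem_checkerboard_iff hη hz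
  by_cases hzB : z ∈ checkerboard d
  · exact .inl ⟨hzB, hdist ▸ distSet_le_l2_sub (hflip.not.2 (not_not.2 hzB))⟩
  · exact .inr ⟨hzB, hdist ▸ distSet_le_l2_sub (hflip.2 hzB)⟩

/-- Checkerboard partition lower bound (Example 1, Eq. (14)). -/
theorem checkerboard_lower_bound (d : ℕ) (η : ℝ) (hη : η ∈ Set.Icc (0 : ℝ) (1 / 2)) :
    ((stdGaussian d)
        {z | z ∈ {z : Fin d → ℝ | Even (∑ i, ⌊z i⌋)} ∧
          distSet z {z : Fin d → ℝ | Even (∑ i, ⌊z i⌋)}ᶜ ≤ η}).toReal +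
      ((stdGaussian d)
        {z | z ∈ {z : Fin d → ℝ | Even (∑ i, ⌊z i⌋)}ᶜ ∧
          distSet z {z : Fin d → ℝ | Even (∑ i, ⌊z i⌋)} ≤ η}).toReal ≥
      1 - (1 - η) ^ d := by
  obtain ⟨hη0, hη⟩ := hη
  set S := univ.pi fun _ : Fin d => Int.fract ⁻¹' Icc η (1 - η)
  have hS : MeasurableSet S := .univ_pi fun _ => measurable_fract measurableSet_Icc
  have hνS : (stdGaussian d).real S ≤ (1 - η) ^ d := by
    rw [stdGaussian_real_univ_pi]
    exact pow_le_pow_left₀ measureReal_nonneg (gaussianReal_fract_preimage_Icc_le hη0 hη) d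
  calc 1 - (1 - η) ^ d ≤ (stdGaussian d).real Sᶜ := by
        rw [probReal_compl_eq_one_sub hS]
        linarith
    _ ≤ (stdGaussian d).real _ := measureReal_mono (compl_pi_fract_subset (by linarith))
    _ ≤ _ := measureReal_union_le _ _
end

section
/- For any integer j and any η ∈ [0, 1/2], ∫_{j+η}^{j+1-η} e^{-z²/2} dz ≤ (1-η) · ∫_j^{j+1} e^{-z²/2} dz. -/
/-! For a nonnegative antitone `f` on `[a, b]` the central piece `[a + η, b - η]` carries
at most the mass `(b - a - 2η) f(a + η)`, while the left end `[a, a + η]` alone already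
carries `η f(a + η)`; comparing the two gives the bound. The nondecreasing case is its
mirror image under `z ↦ -z`, and the Gaussian kernel is monotone on every `[j, j + 1]`. -/

open Real Set intervalIntegral

theorem AntitoneOn.mul_integral_central_le {f : ℝ → ℝ} {a b η : ℝ}
    (hf : AntitoneOn f (Icc a b)) (hfb : 0 ≤ f b) (hη0 : 0 ≤ η) (hη : 2 * η ≤ b - a) :
    (b - a) * ∫ x in (a + η)..(b - η), f x ≤ (b - a - η) * ∫ x in a..b, f x := by
  have hab : a ≤ b := by linarith
  have hint : ∀ {u v}, u ∈ Icc a b → v ∈ Icc a b → IntervalIntegrable f MeasureTheory.volume u v :=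
    fun hu hv => (hf.mono (uIcc_subset_Icc hu hv)).intervalIntegrable
  have ha : a ∈ Icc a b := ⟨le_rfl, hab⟩
  have hb : b ∈ Icc a b := ⟨hab, le_rfl⟩
  have haη : a + η ∈ Icc a b := ⟨by linarith, by linarith⟩
  have hbη : b - η ∈ Icc a b := ⟨by linarith, by linarith⟩
  set F := f (a + η)
  have hF : 0 ≤ F := hfb.trans (hf haη hb haη.2)
  have hleft : η * F ≤ ∫ x in a..(a + η), f x := by
    calc η * F = ∫ _ in a..(a + η), F := by simp
      _ ≤ ∫ x in a..(a + η), f x :=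
        integral_mono_on (by linarith) intervalIntegrable_const (hint ha haη)
          fun x hx => hf ⟨hx.1, hx.2.trans haη.2⟩ haη hx.2
  have hcentral : ∫ x in (a + η)..(b - η), f x ≤ (b - a - 2 * η) * F := by
    calc ∫ x in (a + η)..(b - η), f x ≤ ∫ _ in (a + η)..(b - η), F :=
        integral_mono_on (by linarith) (hint haη hbη) intervalIntegrable_const
          fun x hx => hf haη ⟨haη.1.trans hx.1, hx.2.trans hbη.2⟩ hx.1
      _ = (b - a - 2 * η) * F := by rw [integral_const, smul_eq_mul]; ring
  have hright : 0 ≤ ∫ x in (b - η)..b, f x :=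
    integral_nonneg (by linarith) fun x hx => hfb.trans (hf ⟨hbη.1.trans hx.1, hx.2⟩ hb hx.2)
  rw [← integral_add_adjacent_intervals (hint ha hbη) (hint hbη hb),
    ← integral_add_adjacent_intervals (hint ha haη) (hint haη hbη)]
  nlinarith [mul_le_mul_of_nonneg_left hleft (by linarith : 0 ≤ b - a - η),
    mul_le_mul_of_nonneg_left hcentral hη0, mul_nonneg (by linarith : 0 ≤ b - a - η) hright,
    mul_nonneg (mul_nonneg hη0 hη0) hF]

theorem MonotoneOn.mul_integral_central_le {f : ℝ → ℝ} {a b η : ℝ}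
    (hf : MonotoneOn f (Icc a b)) (hfa : 0 ≤ f a) (hη0 : 0 ≤ η) (hη : 2 * η ≤ b - a) :
    (b - a) * ∫ x in (a + η)..(b - η), f x ≤ (b - a - η) * ∫ x in a..b, f x := by
  have hmirror : AntitoneOn (fun x => f (-x)) (Icc (-b) (-a)) := fun x hx y hy hxy =>
    hf ⟨by linarith [hy.2], by linarith [hy.1]⟩ ⟨by linarith [hx.2], by linarith [hx.1]⟩
      (neg_le_neg hxy)
  have h := hmirror.mul_integral_central_le (by simpa using hfa) hη0 (by linarith)
  rwa [integral_comp_neg, integral_comp_neg, neg_neg, neg_neg, show -a - -b = b - a by ring,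
    show -(-a - η) = a + η by ring, show -(-b + η) = b - η by ring] at h

theorem antitoneOn_exp_neg_sq_div_two : AntitoneOn (fun z : ℝ => exp (-z ^ 2 / 2)) (Ici 0) :=
  fun x hx _ _ hxy => exp_le_exp.2 (by nlinarith [mem_Ici.1 hx])

theorem monotoneOn_exp_neg_sq_div_two : MonotoneOn (fun z : ℝ => exp (-z ^ 2 / 2)) (Iic 0) :=
  fun _ _ y hy hxy => exp_le_exp.2 (by nlinarith [mem_Iic.1 hy])

/-- The Gaussian kernel mass of the central subinterval of length `1 - 2η` of a unit
interval `[j, j+1]` is at most a `(1-η)`-fraction of the full mass. -/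
theorem gaussian_kernel_central_interval_bound (j : ℤ) (η : ℝ)
    (hη : η ∈ Set.Icc (0 : ℝ) (1 / 2)) :
    (∫ z in ((j : ℝ) + η)..((j : ℝ) + 1 - η), Real.exp (-z ^ 2 / 2)) ≤
      (1 - η) * ∫ z in (j : ℝ)..((j : ℝ) + 1), Real.exp (-z ^ 2 / 2) := by
  obtain ⟨hη0, hη1⟩ := hη
  have hlen : 2 * η ≤ (j + 1 : ℝ) - j := by linarith
  have h : ((j + 1 : ℝ) - j) * ∫ z in (j + η : ℝ)..(j + 1 - η), exp (-z ^ 2 / 2) ≤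
      ((j + 1 : ℝ) - j - η) * ∫ z in (j : ℝ)..(j + 1), exp (-z ^ 2 / 2) := by
    rcases le_or_gt 0 j with hj | hj
    · have hsub : Icc (j : ℝ) (j + 1) ⊆ Ici 0 := fun z hz => (Int.cast_nonneg hj).trans hz.1
      exact (antitoneOn_exp_neg_sq_div_two.mono hsub).mul_integral_central_le
        (exp_pos _).le hη0 hlen
    · have hsub : Icc (j : ℝ) (j + 1) ⊆ Iic 0 := fun z hz =>
        hz.2.trans (by exact_mod_cast (by omega : j + 1 ≤ 0))
      exact (monotoneOn_exp_neg_sq_div_two.mono hsub).mul_integral_central_le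
        (exp_pos _).le hη0 hlen
  rwa [add_sub_cancel_left, one_mul] at h
end
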